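/- An algebra A is derived discrete if and only if for every r ∈ ℕ there are, up to shift and isomorphism, only finitely many indecomposable objects X• ∈ D^b(A) with cohomological range hr(X•) = r. -/

import Mathlib

/-!
STATEMENT 12: An algebra `A` is derived discrete (for every finitely supported
cohomology dimension vector `d` there are only finitely many indecomposable objects of
`D^b(mod A)` with that cohomology dimension vector, up to isomorphism) if and only if for
every `r ∈ ℕ` there are, up to shift and isomorphism, only finitely many indecomposable
objects `X ∈ D^b(mod A)` with cohomological range `hr(X) = r`.
-/

open CategoryTheory Limits

universe u
variable (k : Type u) [Field k] [IsAlgClosed k]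

section Defs

variable (R : Type u) [Ring R] [Algebra k R] [FiniteDimensional k R]
  [HasDerivedCategory.{u} (ModuleCat.{u} R)]

/-- The `i`-th cohomology of an object of the derived category. -/
noncomputable def Hobj (i : ℤ) (X : DerivedCategory (ModuleCat.{u} R)) : ModuleCat R :=
  (DerivedCategory.homologyFunctor (ModuleCat R) i).obj X

/-- `dim_k H^i(X)`. -/
noncomputable def hdim (i : ℤ) (X : DerivedCategory (ModuleCat.{u} R)) : ℕ :=
  Module.finrank k ((ModuleCat.restrictScalars (algebraMap k R)).obj (Hobj R i X))

/-- The cohomological length `hl(X) = max_i dim_k H^i(X)`. -/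
noncomputable def hl (X : DerivedCategory (ModuleCat.{u} R)) : ℕ :=
  sSup (Set.range fun i : ℤ => hdim k R i X)

/-- The cohomological width `hw(X) = max { j - i + 1 | H^i(X) ≠ 0 ≠ H^j(X) }`. -/
noncomputable def hw (X : DerivedCategory (ModuleCat.{u} R)) : ℕ :=
  sSup {n : ℕ | ∃ i j : ℤ, ¬ IsZero (Hobj R i X) ∧ ¬ IsZero (Hobj R j X) ∧ (n : ℤ) = j - i + 1}

/-- The cohomological range `hr(X) = hw(X) · hl(X)`. -/
noncomputable def hr (X : DerivedCategory (ModuleCat.{u} R)) : ℕ := hw R X * hl k R X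

/-- An object of an additive category is indecomposable iff it is nonzero and its only
idempotent endomorphisms are `0` and the identity. -/
def Indec {D : Type*} [Category D] [Limits.HasZeroMorphisms D] (X : D) : Prop :=
  ¬ IsZero X ∧ ∀ e : X ⟶ X, e ≫ e = e → e = 0 ∨ e = 𝟙 X

/-- `X` has bounded cohomology, i.e. `X` lies in `D^b`. -/
def Bdd (X : DerivedCategory (ModuleCat.{u} R)) : Prop :=
  ∃ a b : ℤ, ∀ i : ℤ, (i < a ∨ b < i) → IsZero (Hobj R i X)

/-- All cohomologies of `X` are finite dimensional over `k`, i.e. `X` lies in the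
bounded derived category of finite-dimensional modules. -/
def FinCoh (X : DerivedCategory (ModuleCat.{u} R)) : Prop :=
  ∀ i : ℤ, FiniteDimensional k
    ((ModuleCat.restrictScalars (algebraMap k R)).obj (Hobj R i X))

/-- Objects of `D^b(mod R)` (bounded, finite-dimensional cohomology). -/
def InDb (X : DerivedCategory (ModuleCat.{u} R)) : Prop := Bdd R X ∧ FinCoh k R X

/-- The global cohomological length `gl.hl R`, as a value in `ℕ∞`. -/
noncomputable def glhl : ℕ∞ :=
  ⨆ X : {X : DerivedCategory (ModuleCat.{u} R) // Indec X ∧ InDb k R X}, (hl k R X.1 : ℕ∞)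

/-- The global cohomological width `gl.hw R`, as a value in `ℕ∞`. -/
noncomputable def glhw : ℕ∞ :=
  ⨆ X : {X : DerivedCategory (ModuleCat.{u} R) // Indec X ∧ InDb k R X}, (hw R X.1 : ℕ∞)

/-- The global cohomological range `gl.hr R`, as a value in `ℕ∞`. -/
noncomputable def glhr : ℕ∞ :=
  ⨆ X : {X : DerivedCategory (ModuleCat.{u} R) // Indec X ∧ InDb k R X}, (hr k R X.1 : ℕ∞)

/-- `R` is strongly derived unbounded: there is an infinite strictly increasing sequence
`(rᵢ)` such that for each `i` there are infinitely many indecomposable objects of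
`D^b(mod R)` of cohomological range `rᵢ`, pairwise distinct up to shift and isomorphism. -/
def StronglyDerivedUnbounded : Prop :=
  ∃ r : ℕ → ℕ, StrictMono r ∧ ∀ i : ℕ, ∃ X : ℕ → DerivedCategory (ModuleCat.{u} R),
    (∀ j : ℕ, Indec (X j) ∧ InDb k R (X j) ∧ hr k R (X j) = r i) ∧
    (∀ j j' : ℕ, j ≠ j' → ∀ n : ℤ, IsEmpty (X j ≅ (X j')⟦n⟧))

end Defs

/-- `A` is derived discrete. -/
def DerivedDiscrete (A : Type u) [Ring A] [Algebra k A] [FiniteDimensional k A]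
    [HasDerivedCategory.{u} (ModuleCat.{u} A)] : Prop :=
  ∀ d : ℤ →₀ ℕ, ∃ (ι : Type u) (_ : Finite ι)
    (rep : ι → DerivedCategory (ModuleCat.{u} A)),
    ∀ X : DerivedCategory (ModuleCat.{u} A),
      Indec X → InDb k A X → (∀ n : ℤ, hdim k A n X = d n) →
      ∃ i : ι, Nonempty (X ≅ rep i)

/-!
A nonzero object of `D^b` with `hr = r` has `hw ≤ r` and `hl ≤ r`; shifted so that its lowest
nonzero cohomology sits in degree `0`, its cohomology dimension vector therefore lies in the
finite box `dimVectorBound r`, and derived discreteness leaves finitely many objects for each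
vector in the box. Conversely, `hr` depends only on the dimension vector, and a nonzero finitely
supported vector on `ℤ` is not periodic, so at most one shift of each representative has the
prescribed dimension vector.
-/

namespace DerivedCategory

open ZeroObject

variable {C : Type*} [Category C] [Abelian C] [HasDerivedCategory C]

lemma isZero_iff_forall_isZero_homology (X : DerivedCategory C) :
    IsZero X ↔ ∀ n : ℤ, IsZero ((homologyFunctor C n).obj X) := by
  refine ⟨fun h n => (homologyFunctor C n).map_isZero h, fun h => ?_⟩
  have : IsIso (0 : X ⟶ 0) := (isIso_iff C (0 : X ⟶ 0)).2 fun n =>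
    ⟨0, (h n).eq_of_src _ _, ((homologyFunctor C n).map_isZero (isZero_zero _)).eq_of_src _ _⟩
  exact (asIso (0 : X ⟶ 0)).isZero_iff.2 (isZero_zero _)

end DerivedCategory

lemma Indec.map {D E : Type*} [Category D] [Category E] [HasZeroMorphisms D]
    [HasZeroMorphisms E] (F : D ⥤ E) [F.Full] [F.Faithful] [F.PreservesZeroMorphisms]
    {X : D} (hX : Indec X) : Indec (F.obj X) := by
  refine ⟨fun h => hX.1 ?_, fun e he => ?_⟩
  · rw [IsZero.iff_id_eq_zero] at h ⊢
    exact F.map_injective (by rw [F.map_id, F.map_zero, h])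
  · obtain ⟨e, rfl⟩ := F.map_surjective e
    rcases hX.2 e (F.map_injective (by rw [F.map_comp, he])) with rfl | rfl
    · exact Or.inl (F.map_zero X X)
    · exact Or.inr (F.map_id X)

theorem Finsupp.eq_zero_of_periodic {G M : Type*} [AddCommGroup G] [LinearOrder G]
    [IsOrderedAddMonoid G] [Zero M] {d : G →₀ M} {t : G} (hd : Function.Periodic d t)
    (ht : t ≠ 0) : d = 0 := by
  wlog ht₀ : 0 < t generalizing t
  · exact this hd.neg (neg_ne_zero.2 ht) (neg_pos.2 ((not_lt.1 ht₀).lt_of_ne ht))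
  by_contra hd₀
  have hs := Finsupp.support_nonempty_iff.2 hd₀
  have hmax : d.support.max' hs + t ∈ d.support := by
    rw [Finsupp.mem_support_iff, hd]
    exact Finsupp.mem_support_iff.1 (d.support.max'_mem hs)
  exact (d.support.le_max' _ hmax).not_gt (lt_add_of_pos_right _ ht₀)

theorem Finsupp.exists_coe_eq_of_forall_le {ι M : Type*} [AddCommMonoid M] [PartialOrder M]
    [CanonicallyOrderedAdd M] {f : ι → M} {b : ι →₀ M} (h : ∀ i, f i ≤ b i) :
    ∃ d : ι →₀ M, d ≤ b ∧ ⇑d = f := by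
  refine ⟨Finsupp.ofSupportFinite f (b.support.finite_toSet.subset fun i hi => ?_), h, rfl⟩
  exact Finsupp.mem_support_iff.2 fun hb => hi (le_zero_iff.1 (hb ▸ h i))

section Cohomology

variable {k : Type u} [Field k] {R : Type u} [Ring R] [Algebra k R]
  [HasDerivedCategory.{u} (ModuleCat.{u} R)]

noncomputable def Hobj.shiftIso (X : DerivedCategory (ModuleCat.{u} R)) (n i : ℤ) :
    Hobj R i (X⟦n⟧) ≅ Hobj R (n + i) X :=
  ((DerivedCategory.homologyFunctor (ModuleCat.{u} R) 0).shiftIso n i _ rfl).app X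

lemma isZero_iff_forall_isZero_Hobj (X : DerivedCategory (ModuleCat.{u} R)) :
    IsZero X ↔ ∀ i : ℤ, IsZero (Hobj R i X) :=
  DerivedCategory.isZero_iff_forall_isZero_homology X

lemma exists_not_isZero_Hobj {X : DerivedCategory (ModuleCat.{u} R)} (h : ¬ IsZero X) :
    ∃ i : ℤ, ¬ IsZero (Hobj R i X) := by
  simpa only [isZero_iff_forall_isZero_Hobj, not_forall] using h

lemma hdim_eq_zero_iff {X : DerivedCategory (ModuleCat.{u} R)} (hX : FinCoh k R X) (i : ℤ) :
    hdim k R i X = 0 ↔ IsZero (Hobj R i X) := by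
  have := hX i
  rw [hdim, Module.finrank_zero_iff, ModuleCat.isZero_iff_subsingleton]
  rfl

lemma exists_hdim_ne_zero {X : DerivedCategory (ModuleCat.{u} R)} (hX : FinCoh k R X)
    (h : ¬ IsZero X) : ∃ i : ℤ, hdim k R i X ≠ 0 := by
  simpa only [ne_eq, hdim_eq_zero_iff hX] using exists_not_isZero_Hobj h

lemma hdim_eq_of_iso {X Y : DerivedCategory (ModuleCat.{u} R)} {i j : ℤ}
    (e : Hobj R i X ≅ Hobj R j Y) : hdim k R i X = hdim k R j Y :=
  ((ModuleCat.restrictScalars (algebraMap k R)).mapIso e).toLinearEquiv.finrank_eq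

lemma hdim_congr {X Y : DerivedCategory (ModuleCat.{u} R)} (e : X ≅ Y) (i : ℤ) :
    hdim k R i X = hdim k R i Y :=
  hdim_eq_of_iso ((DerivedCategory.homologyFunctor _ i).mapIso e)

lemma hdim_shift (X : DerivedCategory (ModuleCat.{u} R)) (n i : ℤ) :
    hdim k R i (X⟦n⟧) = hdim k R (n + i) X :=
  hdim_eq_of_iso (Hobj.shiftIso X n i)

lemma InDb.shift {X : DerivedCategory (ModuleCat.{u} R)} (hX : InDb k R X) (n : ℤ) :
    InDb k R (X⟦n⟧) := by
  obtain ⟨⟨a, b, hab⟩, hfin⟩ := hX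
  refine ⟨⟨a - n, b - n, fun i hi => (Hobj.shiftIso X n i).isZero_iff.2 (hab _ (by omega))⟩,
    fun i => ?_⟩
  have := hfin (n + i)
  exact ((ModuleCat.restrictScalars (algebraMap k R)).mapIso
    (Hobj.shiftIso X n i)).toLinearEquiv.symm.finiteDimensional

lemma mem_Icc_of_not_isZero_Hobj {X : DerivedCategory (ModuleCat.{u} R)} {a b : ℤ}
    (hab : ∀ i : ℤ, (i < a ∨ b < i) → IsZero (Hobj R i X)) {i : ℤ}
    (hi : ¬ IsZero (Hobj R i X)) : i ∈ Set.Icc a b := by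
  by_contra h
  exact hi (hab i (by rw [Set.mem_Icc] at h; omega))

lemma hdim_le_hl {X : DerivedCategory (ModuleCat.{u} R)} (hX : InDb k R X) (i : ℤ) :
    hdim k R i X ≤ hl k R X := by
  obtain ⟨⟨a, b, hab⟩, hfin⟩ := hX
  refine le_csSup ((((Set.finite_Icc a b).image fun i => hdim k R i X).insert 0).bddAbove.mono ?_)
    ⟨i, rfl⟩
  rintro _ ⟨j, rfl⟩
  by_cases hj : IsZero (Hobj R j X)
  · exact Or.inl ((hdim_eq_zero_iff hfin j).2 hj)
  · exact Or.inr ⟨j, mem_Icc_of_not_isZero_Hobj hab hj, rfl⟩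

lemma le_hw {X : DerivedCategory (ModuleCat.{u} R)} (hX : Bdd R X) {i j : ℤ}
    (hi : ¬ IsZero (Hobj R i X)) (hj : ¬ IsZero (Hobj R j X)) (hij : i ≤ j) :
    j - i + 1 ≤ (hw R X : ℤ) := by
  obtain ⟨a, b, hab⟩ := hX
  suffices (j - i + 1).toNat ≤ hw R X by omega
  refine le_csSup ⟨(b - a + 1).toNat, ?_⟩ ⟨i, j, hi, hj, by omega⟩
  rintro _ ⟨i', j', hi', hj', hn⟩
  have := mem_Icc_of_not_isZero_Hobj hab hi'
  have := mem_Icc_of_not_isZero_Hobj hab hj'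
  simp only [Set.mem_Icc] at *
  omega

lemma hl_le_hr {X : DerivedCategory (ModuleCat.{u} R)} (hX : Bdd R X) (h : ¬ IsZero X) :
    hl k R X ≤ hr k R X := by
  obtain ⟨i, hi⟩ := exists_not_isZero_Hobj h
  have := le_hw hX hi hi le_rfl
  exact Nat.le_mul_of_pos_left _ (by omega)

lemma hw_le_hr {X : DerivedCategory (ModuleCat.{u} R)} (hX : InDb k R X) (h : ¬ IsZero X) :
    hw R X ≤ hr k R X := by
  obtain ⟨i, hi⟩ := exists_hdim_ne_zero hX.2 h
  have := hdim_le_hl hX i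
  exact Nat.le_mul_of_pos_right _ (by omega)

lemma hr_eq_of_hdim_eq {X Y : DerivedCategory (ModuleCat.{u} R)} (hX : FinCoh k R X)
    (hY : FinCoh k R Y) (h : ∀ i : ℤ, hdim k R i X = hdim k R i Y) :
    hr k R X = hr k R Y := by
  simp only [hr, hl, hw, h, ← hdim_eq_zero_iff hX, ← hdim_eq_zero_iff hY]

end Cohomology

section Range

variable {k : Type u} [Field k]

noncomputable def dimVectorBound (r : ℕ) : ℤ →₀ ℕ :=
  Finsupp.indicator (Finset.Ico 0 (r : ℤ)) fun _ _ => r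

variable {R : Type u} [Ring R] [Algebra k R] [HasDerivedCategory.{u} (ModuleCat.{u} R)]

lemma exists_shift_hdim_le_dimVectorBound {X : DerivedCategory (ModuleCat.{u} R)}
    (hX : InDb k R X) (h : ¬ IsZero X) :
    ∃ m : ℤ, ∀ i : ℤ, hdim k R i (X⟦m⟧) ≤ dimVectorBound (hr k R X) i := by
  classical
  obtain ⟨a, b, hab⟩ := hX.1
  obtain ⟨m, hm, hmin⟩ := Int.exists_least_of_bdd (P := fun i => ¬ IsZero (Hobj R i X))
    ⟨a, fun i hi => (mem_Icc_of_not_isZero_Hobj hab hi).1⟩ (exists_not_isZero_Hobj h)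
  refine ⟨m, fun i => ?_⟩
  rw [hdim_shift]
  by_cases hi : IsZero (Hobj R (m + i) X)
  · rw [(hdim_eq_zero_iff hX.2 _).2 hi]
    exact Nat.zero_le _
  have hmi := hmin _ hi
  have hwidth := le_hw hX.1 hm hi hmi
  have hwr := hw_le_hr hX h
  rw [dimVectorBound, Finsupp.indicator_apply, dif_pos (Finset.mem_Ico.2 ⟨by omega, by omega⟩)]
  exact (hdim_le_hl hX _).trans (hl_le_hr hX.1 h)

lemma eq_of_hdim_shift_eq {d : ℤ →₀ ℕ} (hd : d ≠ 0) {Y : DerivedCategory (ModuleCat.{u} R)}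
    {n n' : ℤ} (hn : ∀ j : ℤ, hdim k R j (Y⟦n⟧) = d j)
    (hn' : ∀ j : ℤ, hdim k R j (Y⟦n'⟧) = d j) : n = n' := by
  have hper : Function.Periodic d (n' - n) := fun j => by
    rw [← hn, ← hn', hdim_shift, hdim_shift]
    congr 1
    ring
  by_contra hne
  exact hd (Finsupp.eq_zero_of_periodic hper (sub_ne_zero.2 (Ne.symm hne)))

end Range

section Directions

variable {k : Type u} [Field k] (A : Type u) [Ring A] [Algebra k A] [FiniteDimensional k A]
  [HasDerivedCategory.{u} (ModuleCat.{u} A)]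

theorem finitely_many_of_each_range_of_derivedDiscrete (h : DerivedDiscrete k A) (r : ℕ) :
    ∃ (ι : Type u) (_ : Finite ι) (rep : ι → DerivedCategory (ModuleCat.{u} A)),
      ∀ X : DerivedCategory (ModuleCat.{u} A), Indec X → InDb k A X → hr k A X = r →
        ∃ (i : ι) (n : ℤ), Nonempty (X ≅ (rep i)⟦n⟧) := by
  choose ι _ rep hrep using h
  have : Finite (Set.Iic (dimVectorBound r)) := (Set.finite_Iic _).to_subtype
  refine ⟨Σ d : Set.Iic (dimVectorBound r), ι d, inferInstance, fun p => rep p.1 p.2, ?_⟩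
  rintro X hX hXdb rfl
  obtain ⟨m, hm⟩ := exists_shift_hdim_le_dimVectorBound hXdb hX.1
  obtain ⟨d, hd, hdX⟩ := Finsupp.exists_coe_eq_of_forall_le hm
  obtain ⟨i, ⟨e⟩⟩ := hrep d (X⟦m⟧) (hX.map _) (hXdb.shift m) fun n => congrFun hdX.symm n
  exact ⟨⟨⟨d, hd⟩, i⟩, -m, ⟨(shiftEquiv _ m).unitIso.app X ≪≫ (shiftFunctor _ (-m)).mapIso e⟩⟩

theorem derivedDiscrete_of_finitely_many_of_each_range
    (h : ∀ r : ℕ, ∃ (ι : Type u) (_ : Finite ι) (rep : ι → DerivedCategory (ModuleCat.{u} A)),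
      ∀ X : DerivedCategory (ModuleCat.{u} A), Indec X → InDb k A X → hr k A X = r →
        ∃ (i : ι) (n : ℤ), Nonempty (X ≅ (rep i)⟦n⟧)) :
    DerivedDiscrete k A := by
  intro d
  by_cases hd : ∃ X₀, Indec X₀ ∧ InDb k A X₀ ∧ ∀ n : ℤ, hdim k A n X₀ = d n
  swap
  · exact ⟨PEmpty, inferInstance, PEmpty.elim, fun X hX hXdb hXd => (hd ⟨X, hX, hXdb, hXd⟩).elim⟩
  obtain ⟨X₀, hX₀, hX₀db, hX₀d⟩ := hd
  have hd₀ : d ≠ 0 := by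
    obtain ⟨i, hi⟩ := exists_hdim_ne_zero hX₀db.2 hX₀.1
    exact fun h => hi (by rw [hX₀d, h, Finsupp.coe_zero, Pi.zero_apply])
  obtain ⟨ι, _, rep, hrep⟩ := h (hr k A X₀)
  let shifts (i : ι) : Set ℤ := {n | ∀ j : ℤ, hdim k A j ((rep i)⟦n⟧) = d j}
  refine ⟨{i // (shifts i).Nonempty}, inferInstance, fun i => (rep i)⟦i.2.some⟧, ?_⟩
  intro X hX hXdb hXd
  obtain ⟨i, n, ⟨e⟩⟩ := hrep X hX hXdb
    (hr_eq_of_hdim_eq hXdb.2 hX₀db.2 fun j => (hXd j).trans (hX₀d j).symm)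
  have hn : n ∈ shifts i := fun j => (hdim_congr e j).symm.trans (hXd j)
  have hne : (shifts i).Nonempty := ⟨n, hn⟩
  have huniq : n = hne.some := eq_of_hdim_shift_eq hd₀ hn hne.some_mem
  exact ⟨⟨i, hne⟩, ⟨e ≪≫ eqToIso (congrArg (fun m : ℤ => (rep i)⟦m⟧) huniq)⟩⟩

end Directions

theorem derivedDiscrete_iff_finitely_many_of_each_range
    (A : Type u) [Ring A] [Algebra k A] [FiniteDimensional k A]
    [HasDerivedCategory.{u} (ModuleCat.{u} A)] :
    DerivedDiscrete k A ↔
      ∀ r : ℕ, ∃ (ι : Type u) (_ : Finite ι)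
        (rep : ι → DerivedCategory (ModuleCat.{u} A)),
        ∀ X : DerivedCategory (ModuleCat.{u} A),
          Indec X → InDb k A X → hr k A X = r →
          ∃ (i : ι) (n : ℤ), Nonempty (X ≅ (rep i)⟦n⟧) :=
  ⟨finitely_many_of_each_range_of_derivedDiscrete A,
    derivedDiscrete_of_finitely_many_of_each_range A⟩
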